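/- arXiv:2603.16824 — 2 statements merged into one kernel-verified Lean document; each statement's English description precedes it below -/
import Mathlib

section
/- Let d ≥ 1 be an integer, δ > 1, γ ∈ (0,1) and Γ ≥ 0 be such that γ(δ+1) < δ + Γ. Then there is a constant C > 0, depending only on d, δ, γ, Γ, such that for all β > 0, all x, y ∈ ℝ^d and all 0 < s < t < 1 satisfying |x−y|^d ≥ β s^{−γ} t^{γ−1}, one has ∫_{ℝ^d} ∫_t^1 (t/u)^Γ · ρ_δ(β^{-1} t^γ u^{1−γ} |x−z|^d) · ρ_δ(β^{-1} s^γ u^{1−γ} |y−z|^d) du dz ≤ β C · ρ_δ(β^{-1} s^γ t^{1−γ} |x−y|^d). -/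
/-!
Fix the birth time `u > t` of `z`. By the triangle inequality `z` is at distance at least
`‖x - y‖ / 2` from `x` or from `y`, and there the corresponding factor `ρ_δ` is at most `2^{dδ}`
times its value at distance `‖x - y‖`. Integrating the other factor over `z` gives, by scaling,
`K / c` for `∫ ρ_δ(c ‖x - z‖^d) dz`, where `K = ∫ ρ_δ(‖z‖^d) dz` is finite because `δ > 1`. Of
the two resulting terms the one from `z` far from `x` is the smaller, as `v ↦ v^{1-δ}` decreases.
What is left is `β K ρ_δ(β⁻¹ s^γ t^{1-γ} ‖x - y‖^d)` times `∫_t^∞ (t/u)^p du / t = 1 / (p - 1)`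
with `p = Γ + (1 - γ)(δ + 1)`, and `p > 1` is exactly `γ(δ + 1) < δ + Γ`.

Working with lower Lebesgue integrals lets Tonelli's theorem replace Fubini's, so the
integrability of the integrand never has to be checked.
-/

open MeasureTheory

/-- The long-range connection profile `ρ_δ(z) = min(1, z^{-δ})`. -/
noncomputable def rho (δ z : ℝ) : ℝ := min 1 (z ^ (-δ))

open Real Set Module

lemma rho_nonneg (δ : ℝ) {z : ℝ} (hz : 0 ≤ z) : 0 ≤ rho δ z :=
  le_min zero_le_one (rpow_nonneg hz _)

lemma rho_le_one (δ z : ℝ) : rho δ z ≤ 1 := min_le_left _ _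

lemma rho_le_rpow (δ z : ℝ) : rho δ z ≤ z ^ (-δ) := min_le_right _ _

lemma rho_eq_rpow_of_one_le {δ z : ℝ} (hδ : 0 ≤ δ) (hz : 1 ≤ z) : rho δ z = z ^ (-δ) :=
  min_eq_right (rpow_le_one_of_one_le_of_nonpos hz (neg_nonpos.mpr hδ))

@[fun_prop]
lemma measurable_rho (δ : ℝ) : Measurable (rho δ) := by
  unfold rho; fun_prop

lemma rho_rpow_le_mul_one_add_rpow (δ : ℝ) {k : ℝ} (hk : 0 < k) (hδ : 0 ≤ δ) {w : ℝ}
    (hw : 0 ≤ w) : rho δ (w ^ k) ≤ 2 ^ (k * δ) * (1 + w) ^ (-(k * δ)) := by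
  have h2 : 2 ^ (k * δ) * (1 + w) ^ (-(k * δ)) = (2 / (1 + w)) ^ (k * δ) := by
    rw [div_rpow zero_le_two (by positivity), rpow_neg (by positivity), div_eq_mul_inv]
  rw [h2]
  rcases le_total w 1 with hw1 | hw1
  · exact (rho_le_one δ _).trans
      (one_le_rpow ((one_le_div (by positivity)).mpr (by linarith)) (by positivity))
  · calc rho δ (w ^ k) ≤ (w ^ k) ^ (-δ) := rho_le_rpow δ _
      _ = (1 / w) ^ (k * δ) := by
        rw [← rpow_mul hw, one_div, inv_rpow hw, ← rpow_neg hw, mul_neg]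
      _ ≤ (2 / (1 + w)) ^ (k * δ) := by
        refine rpow_le_rpow (by positivity) ?_ (by positivity)
        rw [div_le_div_iff₀ (by linarith) (by positivity)]
        linarith

lemma rho_mul_rpow_le_of_half_le {δ k a r w : ℝ} (hδ : 0 < δ) (hk : 0 ≤ k) (ha : 0 < a)
    (hr : 0 ≤ r) (hrk : 0 < r ^ k) (hw : r / 2 ≤ w) :
    rho δ (a * w ^ k) ≤ 2 ^ (k * δ) * (a * r ^ k) ^ (-δ) := by
  have hhalf : a * (r / 2) ^ k = 2 ^ (-k) * (a * r ^ k) := by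
    rw [div_rpow hr zero_le_two, rpow_neg zero_le_two]; ring
  calc rho δ (a * w ^ k) ≤ (a * w ^ k) ^ (-δ) := rho_le_rpow δ _
    _ ≤ (a * (r / 2) ^ k) ^ (-δ) := by
        apply rpow_le_rpow_of_nonpos (by rw [hhalf]; positivity) _ (by linarith)
        gcongr
    _ = 2 ^ (k * δ) * (a * r ^ k) ^ (-δ) := by
        rw [hhalf, mul_rpow (by positivity) (by positivity), ← rpow_mul zero_le_two, neg_mul_neg]

lemma rho_mul_rho_le {E : Type*} [SeminormedAddCommGroup E] {δ k p q : ℝ} (hδ : 0 < δ)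
    (hk : 0 ≤ k) (hp : 0 < p) (hq : 0 < q) {x y : E} (hxy : 0 < ‖x - y‖ ^ k) (z : E) :
    rho δ (q * ‖x - z‖ ^ k) * rho δ (p * ‖y - z‖ ^ k) ≤
      2 ^ (k * δ) * ((p * ‖x - y‖ ^ k) ^ (-δ) * rho δ (q * ‖x - z‖ ^ k) +
        (q * ‖x - y‖ ^ k) ^ (-δ) * rho δ (p * ‖y - z‖ ^ k)) := by
  have hρx := rho_nonneg δ (by positivity : 0 ≤ q * ‖x - z‖ ^ k)
  have hρy := rho_nonneg δ (by positivity : 0 ≤ p * ‖y - z‖ ^ k)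
  have htri : ‖x - y‖ ≤ ‖x - z‖ + ‖y - z‖ :=
    (norm_sub_le_norm_sub_add_norm_sub x z y).trans_eq (by rw [norm_sub_rev z y])
  rcases le_or_gt (‖x - y‖ / 2) ‖y - z‖ with hyz | hyz
  · have hfar := mul_le_mul_of_nonneg_left
      (rho_mul_rpow_le_of_half_le hδ hk hp (norm_nonneg _) hxy hyz) hρx
    have : 0 ≤ 2 ^ (k * δ) * ((q * ‖x - y‖ ^ k) ^ (-δ) * rho δ (p * ‖y - z‖ ^ k)) := by
      positivity
    linarith
  · have hxz : ‖x - y‖ / 2 ≤ ‖x - z‖ := by linarith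
    have hfar := mul_le_mul_of_nonneg_right
      (rho_mul_rpow_le_of_half_le hδ hk hq (norm_nonneg _) hxy hxz) hρy
    have : 0 ≤ 2 ^ (k * δ) * ((p * ‖x - y‖ ^ k) ^ (-δ) * rho δ (q * ‖x - z‖ ^ k)) := by
      positivity
    linarith

lemma rpow_neg_mul_div_le {δ p q w : ℝ} (hδ : 1 ≤ δ) (hp : 0 < p) (hpq : p ≤ q) (hw : 0 < w) :
    (q * w) ^ (-δ) / p ≤ (p * w) ^ (-δ) / q := by
  have hq : 0 < q := hp.trans_le hpq
  have key : (q * w) ^ (-δ + 1) ≤ (p * w) ^ (-δ + 1) :=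
    rpow_le_rpow_of_nonpos (by positivity) (by gcongr) (by linarith)
  rw [rpow_add_one (by positivity), rpow_add_one (by positivity)] at key
  rw [div_le_div_iff₀ hp hq]
  nlinarith

lemma div_rpow_mul_rpow_neg_div_eq {β s t u m γ Γ δ : ℝ} (hβ : 0 < β) (hs : 0 < s)
    (ht : 0 < t) (hu : 0 < u) (hm : 0 < m) :
    (t / u) ^ Γ * (β⁻¹ * s ^ γ * u ^ (1 - γ) * m) ^ (-δ) / (β⁻¹ * t ^ γ * u ^ (1 - γ)) =
      β * (β⁻¹ * s ^ γ * t ^ (1 - γ) * m) ^ (-δ) * ((t / u) ^ (Γ + (1 - γ) * (δ + 1)) / t) := by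
  set l := (u / t) ^ (1 - γ)
  have hl : 0 < l := by positivity
  have hu' : u ^ (1 - γ) = t ^ (1 - γ) * l := by
    rw [← mul_rpow ht.le (div_pos hu ht).le, mul_div_cancel₀ _ ht.ne']
  have htt : t ^ γ * t ^ (1 - γ) = t := by
    rw [← rpow_add ht, add_sub_cancel, rpow_one]
  have hl' : l ^ (-δ) / l = (t / u) ^ ((1 - γ) * (δ + 1)) := by
    rw [← rpow_sub_one hl.ne', ← rpow_mul (div_pos hu ht).le, ← inv_div, inv_rpow (by positivity),
      ← rpow_neg (by positivity)]
    ring_nf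
  have hs' : β⁻¹ * s ^ γ * u ^ (1 - γ) * m = β⁻¹ * s ^ γ * t ^ (1 - γ) * m * l := by
    rw [hu']; ring
  have ht' : β⁻¹ * t ^ γ * u ^ (1 - γ) = β⁻¹ * t * l := by
    rw [hu', ← mul_assoc, mul_assoc β⁻¹, htt]
  rw [hs', ht', mul_rpow (by positivity) hl.le, rpow_add (div_pos ht hu), ← hl']
  field_simp

lemma ofReal_integral_le_lintegral_ofReal {α : Type*} [MeasurableSpace α] {μ : Measure α}
    (f : α → ℝ) : ENNReal.ofReal (∫ a, f a ∂μ) ≤ ∫⁻ a, ENNReal.ofReal (f a) ∂μ := by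
  by_cases hf : Integrable f μ
  · rw [integral_eq_lintegral_pos_part_sub_lintegral_neg_part hf]
    refine (ENNReal.ofReal_le_ofReal ?_).trans ENNReal.ofReal_toReal_le
    linarith [ENNReal.toReal_nonneg (a := ∫⁻ a, ENNReal.ofReal (-f a) ∂μ)]
  · simp [integral_undef hf]

lemma integral_integral_le_of_lintegral_lintegral_le {α β : Type*} [MeasurableSpace α]
    [MeasurableSpace β] {μ : Measure α} {ν : Measure β} {f : α → β → ℝ} {M : ℝ} (hM : 0 ≤ M)
    (h : ∫⁻ a, ∫⁻ b, ENNReal.ofReal (f a b) ∂ν ∂μ ≤ ENNReal.ofReal M) :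
    ∫ a, ∫ b, f a b ∂ν ∂μ ≤ M := by
  refine (ENNReal.ofReal_le_ofReal_iff hM).mp ?_
  refine (ofReal_integral_le_lintegral_ofReal _).trans (le_trans ?_ h)
  exact lintegral_mono fun a => ofReal_integral_le_lintegral_ofReal _

lemma lintegral_Ioi_ofReal_mul_div_rpow {p t c : ℝ} (hp : 1 < p) (ht : 0 < t) (hc : 0 ≤ c) :
    ∫⁻ u in Ioi t, ENNReal.ofReal (c * ((t / u) ^ p / t)) = ENNReal.ofReal (c / (p - 1)) := by
  have hpow : ∀ u ∈ Ioi t, c * ((t / u) ^ p / t) = c * t ^ (p - 1) * u ^ (-p) := by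
    intro u hu
    have hu0 : 0 < u := ht.trans hu
    rw [div_rpow ht.le hu0.le, rpow_neg hu0.le, rpow_sub_one ht.ne']
    field_simp
  have hint : IntegrableOn (fun u => c * t ^ (p - 1) * u ^ (-p)) (Ioi t) :=
    (integrableOn_Ioi_rpow_of_lt (by linarith) ht).const_mul _
  rw [setLIntegral_congr_fun measurableSet_Ioi fun u hu => by rw [hpow u hu],
    ← ofReal_integral_eq_lintegral_ofReal hint ((ae_restrict_iff' measurableSet_Ioi).mpr
      (Filter.Eventually.of_forall fun u hu => by have := ht.trans hu; positivity)),
    integral_const_mul, integral_Ioi_rpow_of_lt (by linarith) ht,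
    show -p + 1 = -(p - 1) by ring, rpow_neg ht.le]
  congr 1
  field_simp [(by linarith : p - 1 ≠ 0)]

section HaarMeasure

variable {E : Type*} [NormedAddCommGroup E] [NormedSpace ℝ E]

lemma norm_smul_rpow_inv_natCast {a : ℝ} (ha : 0 ≤ a) {d : ℕ} (hd : d ≠ 0) (z : E) :
    ‖a ^ (d⁻¹ : ℝ) • z‖ ^ (d : ℝ) = a * ‖z‖ ^ (d : ℝ) := by
  rw [norm_smul, norm_of_nonneg (by positivity), mul_rpow (by positivity) (norm_nonneg _),
    rpow_natCast, rpow_inv_natCast_pow ha hd]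

variable [FiniteDimensional ℝ E] [MeasurableSpace E] [BorelSpace E] (μ : Measure E)
  [μ.IsAddHaarMeasure] {d : ℕ}

lemma integrable_rho_norm_rpow {δ k : ℝ} (hk : 0 < k) (h : (finrank ℝ E : ℝ) < k * δ) :
    Integrable (fun z => rho δ (‖z‖ ^ k)) μ := by
  have hδ : 0 < δ := pos_of_mul_pos_right ((Nat.cast_nonneg _).trans_lt h) hk.le
  refine ((integrable_one_add_norm h).const_mul (2 ^ (k * δ))).mono'
    (Measurable.aestronglyMeasurable (by fun_prop)) (Filter.Eventually.of_forall fun z => ?_)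
  rw [Real.norm_of_nonneg (rho_nonneg δ (by positivity))]
  exact rho_rpow_le_mul_one_add_rpow δ hk hδ.le (norm_nonneg z)

lemma integral_comp_mul_norm_rpow (hE : finrank ℝ E = d) (hd : 0 < d) (f : ℝ → ℝ) {a : ℝ}
    (ha : 0 < a) : ∫ z, f (a * ‖z‖ ^ (d : ℝ)) ∂μ = a⁻¹ * ∫ z, f (‖z‖ ^ (d : ℝ)) ∂μ := by
  have := Measure.integral_comp_smul_of_nonneg μ (fun z => f (‖z‖ ^ (d : ℝ))) (a ^ (d⁻¹ : ℝ))
    (hR := by positivity)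
  simp only [norm_smul_rpow_inv_natCast ha.le hd.ne'] at this
  rw [this, hE, ← rpow_natCast, ← rpow_mul ha.le, inv_mul_cancel₀ (by positivity), rpow_one,
    smul_eq_mul]

lemma integrable_rho_mul_norm_sub_rpow (hE : finrank ℝ E = d) (hd : 0 < d) {δ : ℝ} (hδ : 1 < δ)
    {a : ℝ} (ha : 0 < a) (x : E) : Integrable (fun z => rho δ (a * ‖x - z‖ ^ (d : ℝ))) μ := by
  have hint := integrable_rho_norm_rpow μ (δ := δ) (k := d) (by positivity)
    (by rw [hE]; nlinarith [(Nat.one_le_cast (α := ℝ)).mpr hd])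
  have := (hint.comp_smul (rpow_pos_of_pos ha (d⁻¹ : ℝ)).ne').comp_sub_left x
  simpa only [norm_smul_rpow_inv_natCast ha.le hd.ne'] using this

lemma integral_rho_mul_norm_sub_rpow (hE : finrank ℝ E = d) (hd : 0 < d) (δ : ℝ) {a : ℝ}
    (ha : 0 < a) (x : E) :
    ∫ z, rho δ (a * ‖x - z‖ ^ (d : ℝ)) ∂μ = a⁻¹ * ∫ z, rho δ (‖z‖ ^ (d : ℝ)) ∂μ := by
  rw [integral_sub_left_eq_self (fun z => rho δ (a * ‖z‖ ^ (d : ℝ))) μ x,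
    integral_comp_mul_norm_rpow μ hE hd _ ha]

lemma lintegral_ofReal_mul_rho_add_mul_rho (hE : finrank ℝ E = d) (hd : 0 < d) {δ : ℝ} (hδ : 1 < δ)
    {p q c₁ c₂ : ℝ} (hp : 0 < p) (hq : 0 < q) (hc₁ : 0 ≤ c₁) (hc₂ : 0 ≤ c₂) (x y : E) :
    ∫⁻ z, ENNReal.ofReal
        (c₁ * rho δ (q * ‖x - z‖ ^ (d : ℝ)) + c₂ * rho δ (p * ‖y - z‖ ^ (d : ℝ))) ∂μ =
      ENNReal.ofReal ((c₁ / q + c₂ / p) * ∫ z, rho δ (‖z‖ ^ (d : ℝ)) ∂μ) := by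
  have hx := integrable_rho_mul_norm_sub_rpow μ hE hd hδ hq x
  have hy := integrable_rho_mul_norm_sub_rpow μ hE hd hδ hp y
  have hsum : Integrable (fun z => c₁ * rho δ (q * ‖x - z‖ ^ (d : ℝ)) +
      c₂ * rho δ (p * ‖y - z‖ ^ (d : ℝ))) μ := (hx.const_mul c₁).add (hy.const_mul c₂)
  rw [← ofReal_integral_eq_lintegral_ofReal hsum (Filter.Eventually.of_forall fun z => by
      have := rho_nonneg δ (by positivity : 0 ≤ q * ‖x - z‖ ^ (d : ℝ))
      have := rho_nonneg δ (by positivity : 0 ≤ p * ‖y - z‖ ^ (d : ℝ))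
      positivity),
    integral_add (hx.const_mul c₁) (hy.const_mul c₂), integral_const_mul, integral_const_mul,
    integral_rho_mul_norm_sub_rpow μ hE hd δ hq, integral_rho_mul_norm_sub_rpow μ hE hd δ hp]
  ring_nf

lemma lintegral_rho_mul_rho_le (hE : finrank ℝ E = d) (hd : 0 < d) {δ : ℝ} (hδ : 1 < δ)
    {p q c : ℝ} (hp : 0 < p) (hpq : p ≤ q) (hc : 0 ≤ c) {x y : E}
    (hxy : 0 < ‖x - y‖ ^ (d : ℝ)) :
    ∫⁻ z, ENNReal.ofReal (c * rho δ (q * ‖x - z‖ ^ (d : ℝ)) * rho δ (p * ‖y - z‖ ^ (d : ℝ))) ∂μ ≤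
      ENNReal.ofReal (2 ^ ((d : ℝ) * δ + 1) * c * (p * ‖x - y‖ ^ (d : ℝ)) ^ (-δ) / q *
        ∫ z, rho δ (‖z‖ ^ (d : ℝ)) ∂μ) := by
  have hq : 0 < q := hp.trans_le hpq
  set c₁ := c * 2 ^ ((d : ℝ) * δ) * (p * ‖x - y‖ ^ (d : ℝ)) ^ (-δ)
  set c₂ := c * 2 ^ ((d : ℝ) * δ) * (q * ‖x - y‖ ^ (d : ℝ)) ^ (-δ)
  have hK : 0 ≤ ∫ z, rho δ (‖z‖ ^ (d : ℝ)) ∂μ :=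
    integral_nonneg fun z => rho_nonneg δ (by positivity)
  calc _ ≤ ∫⁻ z, ENNReal.ofReal
          (c₁ * rho δ (q * ‖x - z‖ ^ (d : ℝ)) + c₂ * rho δ (p * ‖y - z‖ ^ (d : ℝ))) ∂μ := by
        refine lintegral_mono fun z => ENNReal.ofReal_le_ofReal ?_
        have := mul_le_mul_of_nonneg_left
          (rho_mul_rho_le (by linarith : 0 < δ) (Nat.cast_nonneg d) hp hq hxy z) hc
        simp only [c₁, c₂]
        linarith
    _ = ENNReal.ofReal ((c₁ / q + c₂ / p) * ∫ z, rho δ (‖z‖ ^ (d : ℝ)) ∂μ) :=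
        lintegral_ofReal_mul_rho_add_mul_rho μ hE hd hδ hp hq (by positivity) (by positivity) x y
    _ ≤ _ := by
        have hcmp : c₂ / p ≤ c₁ / q := by
          simp only [c₁, c₂, mul_div_assoc]
          exact mul_le_mul_of_nonneg_left (rpow_neg_mul_div_le hδ.le hp hpq hxy) (by positivity)
        refine ENNReal.ofReal_le_ofReal (mul_le_mul_of_nonneg_right ?_ hK)
        calc c₁ / q + c₂ / p ≤ 2 * (c₁ / q) := by linarith
          _ = _ := by rw [rpow_add_one two_ne_zero]; ring

lemma lintegral_lintegral_rho_mul_rho_le (hE : finrank ℝ E = d) (hd : 0 < d) {δ γ Γ : ℝ}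
    (hδ : 1 < δ) (hγ : 0 ≤ γ) (hp : 1 < Γ + (1 - γ) * (δ + 1)) {β s t : ℝ} (hβ : 0 < β)
    (hs : 0 < s) (hst : s ≤ t) {x y : E} (hxy : 0 < ‖x - y‖ ^ (d : ℝ)) :
    ∫⁻ z, (∫⁻ u in Ioi t, ENNReal.ofReal ((t / u) ^ Γ *
        rho δ (β⁻¹ * t ^ γ * u ^ (1 - γ) * ‖x - z‖ ^ (d : ℝ)) *
        rho δ (β⁻¹ * s ^ γ * u ^ (1 - γ) * ‖y - z‖ ^ (d : ℝ)))) ∂μ ≤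
      ENNReal.ofReal (2 ^ ((d : ℝ) * δ + 1) * (∫ z, rho δ (‖z‖ ^ (d : ℝ)) ∂μ) *
        (β * (β⁻¹ * s ^ γ * t ^ (1 - γ) * ‖x - y‖ ^ (d : ℝ)) ^ (-δ)) /
        (Γ + (1 - γ) * (δ + 1) - 1)) := by
  set K := ∫ z, rho δ (‖z‖ ^ (d : ℝ)) ∂μ
  have hK : 0 ≤ K := integral_nonneg fun z => rho_nonneg δ (by positivity)
  have ht : 0 < t := hs.trans_le hst
  calc _ = ∫⁻ u in Ioi t, ∫⁻ z, ENNReal.ofReal ((t / u) ^ Γ *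
              rho δ (β⁻¹ * t ^ γ * u ^ (1 - γ) * ‖x - z‖ ^ (d : ℝ)) *
              rho δ (β⁻¹ * s ^ γ * u ^ (1 - γ) * ‖y - z‖ ^ (d : ℝ))) ∂μ :=
        lintegral_lintegral_swap (Measurable.aemeasurable (by fun_prop))
    _ ≤ ∫⁻ u in Ioi t, ENNReal.ofReal (2 ^ ((d : ℝ) * δ + 1) * (t / u) ^ Γ *
              (β⁻¹ * s ^ γ * u ^ (1 - γ) * ‖x - y‖ ^ (d : ℝ)) ^ (-δ) /
              (β⁻¹ * t ^ γ * u ^ (1 - γ)) * K) := by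
        refine setLIntegral_mono' measurableSet_Ioi fun u hu => ?_
        have hu0 : 0 < u := ht.trans hu
        exact lintegral_rho_mul_rho_le μ hE hd hδ (by positivity) (by gcongr) (by positivity) hxy
    _ = ∫⁻ u in Ioi t, ENNReal.ofReal (2 ^ ((d : ℝ) * δ + 1) * K *
          (β * (β⁻¹ * s ^ γ * t ^ (1 - γ) * ‖x - y‖ ^ (d : ℝ)) ^ (-δ)) *
          ((t / u) ^ (Γ + (1 - γ) * (δ + 1)) / t)) := by
        refine setLIntegral_congr_fun measurableSet_Ioi fun u hu => congrArg ENNReal.ofReal ?_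
        have key := div_rpow_mul_rpow_neg_div_eq (γ := γ) (Γ := Γ) (δ := δ) hβ hs ht
          (ht.trans hu) hxy
        calc _ = 2 ^ ((d : ℝ) * δ + 1) * K * ((t / u) ^ Γ *
              (β⁻¹ * s ^ γ * u ^ (1 - γ) * ‖x - y‖ ^ (d : ℝ)) ^ (-δ) /
              (β⁻¹ * t ^ γ * u ^ (1 - γ))) := by ring
          _ = _ := by rw [key]; ring
    _ = _ := lintegral_Ioi_ofReal_mul_div_rpow hp ht (by positivity)

end HaarMeasure

theorem stmt9_general (d : ℕ) (hd : 1 ≤ d) (δ γ Γ : ℝ) (hδ : 1 < δ) (hγ0 : 0 < γ)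
    (h : γ * (δ + 1) < δ + Γ) :
    ∃ C : ℝ, 0 < C ∧ ∀ β : ℝ, 0 < β → ∀ x y : EuclideanSpace ℝ (Fin d),
      ∀ s t : ℝ, 0 < s → s < t → t < 1 →
      β * s ^ (-γ) * t ^ (γ - 1) ≤ ‖x - y‖ ^ (d : ℝ) →
      (∫ z : EuclideanSpace ℝ (Fin d), ∫ u in t..1, (t / u) ^ Γ *
            rho δ (β⁻¹ * t ^ γ * u ^ (1 - γ) * ‖x - z‖ ^ (d : ℝ)) *
            rho δ (β⁻¹ * s ^ γ * u ^ (1 - γ) * ‖y - z‖ ^ (d : ℝ)))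
        ≤ β * C * rho δ (β⁻¹ * s ^ γ * t ^ (1 - γ) * ‖x - y‖ ^ (d : ℝ)) := by
  have hp : 1 < Γ + (1 - γ) * (δ + 1) := by linarith
  set K := ∫ z : EuclideanSpace ℝ (Fin d), rho δ (‖z‖ ^ (d : ℝ))
  have hK : 0 ≤ K := integral_nonneg fun z => rho_nonneg δ (by positivity)
  set C₀ := 2 ^ ((d : ℝ) * δ + 1) * K / (Γ + (1 - γ) * (δ + 1) - 1)
  have hC₀ : 0 ≤ C₀ := div_nonneg (by positivity) (by linarith)
  refine ⟨C₀ + 1, by positivity, fun β hβ x y s t hs hst ht1 hxy => ?_⟩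
  have ht : 0 < t := hs.trans hst
  have hm : 0 < ‖x - y‖ ^ (d : ℝ) := lt_of_lt_of_le (by positivity) hxy
  have ha : 1 ≤ β⁻¹ * s ^ γ * t ^ (1 - γ) * ‖x - y‖ ^ (d : ℝ) :=
    calc (1 : ℝ) = β⁻¹ * s ^ γ * t ^ (1 - γ) * (β * s ^ (-γ) * t ^ (γ - 1)) := by
          rw [rpow_neg hs.le, show γ - 1 = -(1 - γ) by ring, rpow_neg ht.le]
          field_simp
      _ ≤ _ := mul_le_mul_of_nonneg_left hxy (by positivity)
  rw [rho_eq_rpow_of_one_le (by linarith) ha]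
  set R := (β⁻¹ * s ^ γ * t ^ (1 - γ) * ‖x - y‖ ^ (d : ℝ)) ^ (-δ)
  simp only [intervalIntegral.integral_of_le ht1.le]
  calc _ ≤ 2 ^ ((d : ℝ) * δ + 1) * K * (β * R) / (Γ + (1 - γ) * (δ + 1) - 1) :=
        integral_integral_le_of_lintegral_lintegral_le (by positivity)
          ((lintegral_mono fun z => lintegral_mono_set Ioc_subset_Ioi_self).trans
            (lintegral_lintegral_rho_mul_rho_le volume finrank_euclideanSpace_fin hd hδ hγ0.le hp
              hβ hs hst.le hm))
    _ = C₀ * (β * R) := by ring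
    _ ≤ (C₀ + 1) * (β * R) := by gcongr; linarith
    _ = β * (C₀ + 1) * R := by ring

/-- Two-connection lemma (subcritical case `γ(δ+1) < δ + Γ`): the expected number
of two-step connectors younger than both endpoints is at most `βC` times the
direct arc probability, provided the endpoints are sufficiently far apart. -/
theorem stmt9 (d : ℕ) (hd : 1 ≤ d) (δ γ Γ : ℝ) (hδ : 1 < δ) (hγ0 : 0 < γ)
    (hγ1 : γ < 1) (hΓ : 0 ≤ Γ) (h : γ * (δ + 1) < δ + Γ) :
    ∃ C : ℝ, 0 < C ∧ ∀ β : ℝ, 0 < β → ∀ x y : EuclideanSpace ℝ (Fin d),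
      ∀ s t : ℝ, 0 < s → s < t → t < 1 →
      β * s ^ (-γ) * t ^ (γ - 1) ≤ ‖x - y‖ ^ (d : ℝ) →
      (∫ z : EuclideanSpace ℝ (Fin d), ∫ u in t..1, (t / u) ^ Γ *
            rho δ (β⁻¹ * t ^ γ * u ^ (1 - γ) * ‖x - z‖ ^ (d : ℝ)) *
            rho δ (β⁻¹ * s ^ γ * u ^ (1 - γ) * ‖y - z‖ ^ (d : ℝ)))
        ≤ β * C * rho δ (β⁻¹ * s ^ γ * t ^ (1 - γ) * ‖x - y‖ ^ (d : ℝ)) :=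
  stmt9_general d hd δ γ Γ hδ hγ0 h
end

section
/- Fix γ ∈ [1/2, 1) and Γ > 0, and define κ_{γ,Γ}(a,b) := b^{−γ} a^{γ−1} if b < a and κ_{γ,Γ}(a,b) := a^{Γ−γ} b^{−(1−γ+Γ)} if b ≥ a, for a, b ∈ (0,1). For ε ∈ (0,1) set A_ε(a) := ∫_ε^1 κ_{γ,Γ}(a,b) db and B_ε(a) := ∫_ε^1 κ_{γ,Γ}(a,b) · ( ∫_ε^1 κ_{γ,Γ}(w,b) dw ) db. Then there exist constants 0 < c ≤ C < ∞ and ε₀ ∈ (0,1) such that for all ε ∈ (0, ε₀): if γ = 1/2 then c · log(1/ε) ≤ ∫_ε^1 A_ε(a) B_ε(a) da ≤ C · log(1/ε), and if γ ∈ (1/2, 1) then c · ε^{1−2γ} ≤ ∫_ε^1 A_ε(a) B_ε(a) da ≤ C · ε^{1−2γ}. -/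
/-!
For the upper bound, split each integral at the diagonal and integrate the power laws. With
`W_ε(b) = ∫_ε^1 κ(w,b) dw` and `J_ε = ∫_ε^1 b^{-2γ} db` this gives, for `a, b ∈ [ε, 1]`,
`W_ε(b) ≲ b^{-γ}`, `A_ε(a) ≲ a^{δ-γ}` for a fixed small `δ > 0`, and
`B_ε(a) ≲ a^{γ-1} J_ε + a^{-γ}`. As `a^{-γ} ≤ a^{γ-1} ε^{1-2γ}` for `γ ≥ 1/2`, the integrand
`A_ε B_ε` is `≲ (J_ε + ε^{1-2γ}) a^{δ-1}`, and `a^{δ-1}` is integrable at `0`.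
Conversely `κ(a,b) ≥ b^{-γ}` for `b ≤ a ≤ 1`, so on `a ∈ [1/2, 1]` we get `A_ε(a) ≥ 1/4`,
`W_ε(b) ≥ b^{-γ}/2` for `b ≤ 1/2`, and `B_ε(a) ≥ ½ ∫_ε^{1/2} b^{-2γ} db`.
Both bounds are of order `log(1/ε)` when `γ = 1/2` and `ε^{1-2γ}` when `γ > 1/2`.
-/

open MeasureTheory

/-- The spatially integrated connection kernel `κ_{γ,Γ}(a,b)` of the directed
age-dependent random connection model: `b^{-γ} a^{γ-1}` if `b < a` (forward) and
`a^{Γ-γ} b^{-(1-γ+Γ)}` if `b ≥ a` (reciprocal). -/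
noncomputable def kappa (γ Γ a b : ℝ) : ℝ :=
  if b < a then b ^ (-γ) * a ^ (γ - 1) else a ^ (Γ - γ) * b ^ (-(1 - γ + Γ))

/-- The truncated expected open-bow-tie count
`∫_ε^1 A_ε(a) B_ε(a) da` with `A_ε(a) = ∫_ε^1 κ(a,b) db` and
`B_ε(a) = ∫_ε^1 κ(a,b) (∫_ε^1 κ(w,b) dw) db`. -/
noncomputable def openBowTie (γ Γ ε : ℝ) : ℝ :=
  ∫ a in ε..1,
    (∫ b in ε..1, kappa γ Γ a b) *
    (∫ b in ε..1, kappa γ Γ a b * ∫ w in ε..1, kappa γ Γ w b)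

open Set Real intervalIntegral Function
open scoped Interval

section Integrals

variable {f : ℝ → ℝ} {u v p s γ ε M : ℝ}

theorem intervalIntegrable_of_norm_le (hf : Measurable f) (h : ∀ x ∈ [[u, v]], ‖f x‖ ≤ M) :
    IntervalIntegrable f volume u v :=
  intervalIntegrable_const.mono_fun' hf.aestronglyMeasurable
    (ae_restrict_of_forall_mem measurableSet_uIoc fun x hx => h x (uIoc_subset_uIcc hx))

theorem measurable_intervalIntegral {F : ℝ → ℝ → ℝ} (hF : Measurable (uncurry F)) (u v : ℝ) :
    Measurable fun x => ∫ y in u..v, F x y := by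
  simp_rw [intervalIntegral_eq_integral_uIoc]
  exact (hF.stronglyMeasurable.integral_prod_right (ν := volume.restrict (Ι u v))).measurable
    |>.const_smul (M := ℝ) _

theorem integral_rpow_le (hp : -1 < p) (hu : 0 ≤ u) :
    ∫ x in u..v, x ^ p ≤ v ^ (p + 1) / (p + 1) := by
  rw [integral_rpow (Or.inl hp)]
  have : 0 < p + 1 := by linarith
  gcongr
  exact sub_le_self _ (rpow_nonneg hu _)

theorem integral_rpow_neg_one_sub_le (hs : 0 < s) (hu : 0 < u) (huv : u ≤ v) :
    ∫ x in u..v, x ^ (-1 - s) ≤ u ^ (-s) / s := by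
  rw [integral_rpow (Or.inr ⟨by linarith, notMem_uIcc_of_lt hu (hu.trans_le huv)⟩),
    show -1 - s + 1 = -s by ring, div_neg, ← neg_div, neg_sub]
  gcongr
  exact sub_le_self _ (rpow_nonneg (hu.le.trans huv) _)

theorem sub_mul_rpow_le_integral_rpow (hp : p ≤ 0) (hu : 0 < u) (huv : u ≤ v) :
    (v - u) * v ^ p ≤ ∫ x in u..v, x ^ p := by
  rw [← smul_eq_mul, ← intervalIntegral.integral_const]
  exact integral_mono_on huv intervalIntegrable_const
    (intervalIntegrable_rpow (Or.inr (notMem_uIcc_of_lt hu (hu.trans_le huv))))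
    fun x hx => rpow_le_rpow_of_nonpos (hu.trans_le hx.1) hx.2 hp

theorem integral_rpow_neg_one (hu : 0 < u) (hv : 0 < v) :
    ∫ x in u..v, x ^ (-1 : ℝ) = log (v / u) := by
  simp_rw [rpow_neg_one]
  exact integral_inv (notMem_uIcc_of_lt hu hv)

theorem integral_rpow_neg_two_mul_le (hγ : 1 / 2 < γ) (hε : 0 < ε) (hε1 : ε ≤ 1) :
    ∫ b in ε..1, b ^ (-(2 * γ)) ≤ ε ^ (1 - 2 * γ) / (2 * γ - 1) := by
  have := integral_rpow_neg_one_sub_le (by linarith : 0 < 2 * γ - 1) hε hε1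
  rwa [show -1 - (2 * γ - 1) = -(2 * γ) by ring, show -(2 * γ - 1) = 1 - 2 * γ by ring] at this

theorem le_integral_rpow_neg_two_mul (hγ0 : 0 ≤ γ) (hγ1 : γ ≤ 1) (hε : 0 < ε) (hε4 : ε ≤ 1 / 4) :
    ε ^ (1 - 2 * γ) / 4 ≤ ∫ b in ε..1 / 2, b ^ (-(2 * γ)) := calc
  ε ^ (1 - 2 * γ) / 4 ≤ (2 * ε - ε) * (2 * ε) ^ (-(2 * γ)) := by
    have h2 : (2 : ℝ) ^ (-2 : ℝ) ≤ 2 ^ (-(2 * γ)) :=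
      rpow_le_rpow_of_exponent_le one_le_two (by linarith)
    rw [mul_rpow two_pos.le hε.le, show 1 - 2 * γ = 1 + -(2 * γ) by ring, rpow_add hε, rpow_one]
    norm_num at h2
    nlinarith [mul_le_mul_of_nonneg_right h2 (mul_nonneg hε.le (rpow_nonneg hε.le (-(2 * γ))))]
  _ ≤ ∫ b in ε..2 * ε, b ^ (-(2 * γ)) :=
    sub_mul_rpow_le_integral_rpow (by linarith) hε (by linarith)
  _ ≤ ∫ b in ε..1 / 2, b ^ (-(2 * γ)) :=
    integral_mono_interval le_rfl (by linarith) (by linarith)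
      (ae_restrict_of_forall_mem measurableSet_Ioc fun b hb => rpow_nonneg (hε.trans hb.1).le _)
      (intervalIntegrable_rpow (Or.inr (notMem_uIcc_of_lt hε (by norm_num))))

end Integrals

section Kernel

variable {γ Γ ε a b : ℝ}

theorem kappa_of_le (h : a ≤ b) : kappa γ Γ a b = a ^ (Γ - γ) * b ^ (-(1 - γ + Γ)) := by
  rw [kappa, if_neg h.not_gt]

theorem kappa_of_ge (hb : 0 < b) (h : b ≤ a) : kappa γ Γ a b = b ^ (-γ) * a ^ (γ - 1) := by
  rcases h.lt_or_eq with h | rfl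
  · rw [kappa, if_pos h]
  · rw [kappa_of_le le_rfl, ← rpow_add hb, ← rpow_add hb]
    ring_nf

theorem kappa_nonneg (ha : 0 ≤ a) (hb : 0 ≤ b) : 0 ≤ kappa γ Γ a b := by
  unfold kappa
  split <;> positivity

theorem measurable_kappa : Measurable (uncurry (kappa γ Γ)) :=
  Measurable.ite (measurableSet_lt measurable_snd measurable_fst)
    ((measurable_snd.pow_const _).mul (measurable_fst.pow_const _))
    ((measurable_fst.pow_const _).mul (measurable_snd.pow_const _))

theorem kappa_le_inv (hγ : γ ≤ 1) (hΓ : 0 ≤ Γ) (hε : 0 < ε) (ha : ε ≤ a) (hb : ε ≤ b) :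
    kappa γ Γ a b ≤ ε⁻¹ := by
  have ha0 := hε.trans_le ha
  have hb0 := hε.trans_le hb
  rcases le_total a b with hab | hba
  · calc kappa γ Γ a b = a ^ (Γ - γ) * b ^ (-(1 - γ + Γ)) := kappa_of_le hab
      _ ≤ a ^ (Γ - γ) * a ^ (-(1 - γ + Γ)) :=
          mul_le_mul_of_nonneg_left (rpow_le_rpow_of_nonpos ha0 hab (by linarith)) (by positivity)
      _ = a⁻¹ := by rw [← rpow_add ha0, ← rpow_neg_one]; ring_nf
      _ ≤ ε⁻¹ := inv_anti₀ hε ha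
  · calc kappa γ Γ a b = b ^ (-γ) * a ^ (γ - 1) := kappa_of_ge hb0 hba
      _ ≤ b ^ (-γ) * b ^ (γ - 1) :=
          mul_le_mul_of_nonneg_left (rpow_le_rpow_of_nonpos hb0 hba (by linarith)) (by positivity)
      _ = b⁻¹ := by rw [← rpow_add hb0, ← rpow_neg_one]; ring_nf
      _ ≤ ε⁻¹ := inv_anti₀ hε hb

theorem rpow_neg_le_kappa (hγ : γ ≤ 1) (hb : 0 < b) (hba : b ≤ a) (ha : a ≤ 1) :
    b ^ (-γ) ≤ kappa γ Γ a b := by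
  rw [kappa_of_ge hb hba]
  exact le_mul_of_one_le_right (by positivity)
    (one_le_rpow_of_pos_of_le_one_of_nonpos (hb.trans_le hba) ha (by linarith))

end Kernel

noncomputable def bowTieA (γ Γ ε a : ℝ) : ℝ := ∫ b in ε..1, kappa γ Γ a b

noncomputable def bowTieW (γ Γ ε b : ℝ) : ℝ := ∫ w in ε..1, kappa γ Γ w b

noncomputable def bowTieB (γ Γ ε a : ℝ) : ℝ := ∫ b in ε..1, kappa γ Γ a b * bowTieW γ Γ ε b

section BowTie

variable {γ Γ ε a b u v : ℝ}

theorem openBowTie_eq :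
    openBowTie γ Γ ε = ∫ a in ε..1, bowTieA γ Γ ε a * bowTieB γ Γ ε a := rfl

theorem measurable_bowTieA : Measurable (bowTieA γ Γ ε) :=
  measurable_intervalIntegral measurable_kappa ε 1

theorem measurable_bowTieW : Measurable (bowTieW γ Γ ε) :=
  measurable_intervalIntegral (F := fun b w => kappa γ Γ w b)
    (measurable_kappa.comp measurable_swap) ε 1

theorem measurable_bowTieB : Measurable (bowTieB γ Γ ε) :=
  measurable_intervalIntegral (F := fun a b => kappa γ Γ a b * bowTieW γ Γ ε b)
    (measurable_kappa.mul (measurable_bowTieW.comp measurable_snd)) ε 1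

theorem bowTieA_nonneg (hε : 0 ≤ ε) (hε1 : ε ≤ 1) (ha : 0 ≤ a) : 0 ≤ bowTieA γ Γ ε a :=
  integral_nonneg hε1 fun _ hb => kappa_nonneg ha (hε.trans hb.1)

theorem bowTieW_nonneg (hε : 0 ≤ ε) (hε1 : ε ≤ 1) (hb : 0 ≤ b) : 0 ≤ bowTieW γ Γ ε b :=
  integral_nonneg hε1 fun _ hw => kappa_nonneg (hε.trans hw.1) hb

theorem bowTieB_nonneg (hε : 0 ≤ ε) (hε1 : ε ≤ 1) (ha : 0 ≤ a) : 0 ≤ bowTieB γ Γ ε a :=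
  integral_nonneg hε1 fun _ hb =>
    mul_nonneg (kappa_nonneg ha (hε.trans hb.1)) (bowTieW_nonneg hε hε1 (hε.trans hb.1))

theorem intervalIntegrable_kappa_right (hγ : γ ≤ 1) (hΓ : 0 ≤ Γ) (hε : 0 < ε) (ha : ε ≤ a)
    (hu : ε ≤ u) (hv : ε ≤ v) : IntervalIntegrable (kappa γ Γ a) volume u v :=
  intervalIntegrable_of_norm_le (measurable_kappa.comp measurable_prodMk_left) fun b hb => by
    have hb : ε ≤ b := (le_min hu hv).trans hb.1
    rw [norm_of_nonneg (kappa_nonneg (hε.trans_le ha).le (hε.trans_le hb).le)]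
    exact kappa_le_inv hγ hΓ hε ha hb

theorem intervalIntegrable_kappa_left (hγ : γ ≤ 1) (hΓ : 0 ≤ Γ) (hε : 0 < ε) (hb : ε ≤ b)
    (hu : ε ≤ u) (hv : ε ≤ v) : IntervalIntegrable (fun w => kappa γ Γ w b) volume u v :=
  intervalIntegrable_of_norm_le (measurable_kappa.comp measurable_prodMk_right) fun w hw => by
    have hw : ε ≤ w := (le_min hu hv).trans hw.1
    rw [norm_of_nonneg (kappa_nonneg (hε.trans_le hw).le (hε.trans_le hb).le)]
    exact kappa_le_inv hγ hΓ hε hw hb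

theorem intervalIntegrable_kappa_mul_rpow (hγ : γ ≤ 1) (hΓ : 0 ≤ Γ) (hε : 0 < ε) (ha : ε ≤ a)
    (hu : ε ≤ u) (hv : ε ≤ v) (p : ℝ) :
    IntervalIntegrable (fun b => kappa γ Γ a b * b ^ p) volume u v :=
  (intervalIntegrable_kappa_right hγ hΓ hε ha hu hv).mul_continuousOn
    (continuousOn_id.rpow_const fun _ hb => Or.inl (hε.trans_le ((le_min hu hv).trans hb.1)).ne')

theorem bowTieW_le (hγ0 : 0 < γ) (hγ1 : γ < 1) (hΓ : 0 ≤ Γ) (hε : 0 < ε) (hb : b ∈ Icc ε 1) :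
    bowTieW γ Γ ε b ≤ (1 / (Γ - γ + 1) + 1 / γ) * b ^ (-γ) := by
  obtain ⟨hεb, hb1⟩ := hb
  have hb0 := hε.trans_le hεb
  have below : ∫ w in ε..b, kappa γ Γ w b ≤ b ^ (-γ) / (Γ - γ + 1) := calc
    ∫ w in ε..b, kappa γ Γ w b = (∫ w in ε..b, w ^ (Γ - γ)) * b ^ (-(1 - γ + Γ)) := by
      rw [← intervalIntegral.integral_mul_const]
      exact integral_congr fun w hw => kappa_of_le (uIcc_of_le hεb ▸ hw).2
    _ ≤ b ^ (Γ - γ + 1) / (Γ - γ + 1) * b ^ (-(1 - γ + Γ)) := by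
      gcongr
      exact integral_rpow_le (by linarith) hε.le
    _ = 1 / (Γ - γ + 1) := by
      rw [div_mul_eq_mul_div, ← rpow_add hb0, show Γ - γ + 1 + -(1 - γ + Γ) = 0 by ring,
        rpow_zero]
    _ ≤ b ^ (-γ) / (Γ - γ + 1) := by
      have : 0 < Γ - γ + 1 := by linarith
      gcongr
      exact one_le_rpow_of_pos_of_le_one_of_nonpos hb0 hb1 (by linarith)
  have above : ∫ w in b..1, kappa γ Γ w b ≤ b ^ (-γ) / γ := calc
    ∫ w in b..1, kappa γ Γ w b = b ^ (-γ) * ∫ w in b..1, w ^ (γ - 1) := by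
      rw [← intervalIntegral.integral_const_mul]
      exact integral_congr fun w hw => kappa_of_ge hb0 (uIcc_of_le hb1 ▸ hw).1
    _ ≤ b ^ (-γ) * ((1 : ℝ) ^ (γ - 1 + 1) / (γ - 1 + 1)) := by
      gcongr
      exact integral_rpow_le (by linarith) hb0.le
    _ = b ^ (-γ) / γ := by rw [one_rpow, sub_add_cancel, mul_one_div]
  rw [bowTieW, ← integral_add_adjacent_intervals
    (intervalIntegrable_kappa_left hγ1.le hΓ hε hεb le_rfl hεb)
    (intervalIntegrable_kappa_left hγ1.le hΓ hε hεb hεb (hεb.trans hb1))]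
  exact (add_le_add below above).trans_eq (by ring)

-- Losing the factor `a ^ δ` avoids the logarithm that `Γ = γ` would produce.
theorem bowTieA_le {δ : ℝ} (hγ1 : γ < 1) (hδ : 0 ≤ δ) (hδγ : δ ≤ γ) (hδΓ : δ < Γ) (hε : 0 < ε)
    (ha : a ∈ Icc ε 1) : bowTieA γ Γ ε a ≤ (1 / (1 - γ) + 1 / (Γ - δ)) * a ^ (δ - γ) := by
  obtain ⟨hεa, ha1⟩ := ha
  have ha0 := hε.trans_le hεa
  have below : ∫ b in ε..a, kappa γ Γ a b ≤ a ^ (δ - γ) / (1 - γ) := calc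
    ∫ b in ε..a, kappa γ Γ a b = (∫ b in ε..a, b ^ (-γ)) * a ^ (γ - 1) := by
      rw [← intervalIntegral.integral_mul_const]
      refine integral_congr fun b hb => ?_
      rw [uIcc_of_le hεa] at hb
      exact kappa_of_ge (hε.trans_le hb.1) hb.2
    _ ≤ a ^ (-γ + 1) / (-γ + 1) * a ^ (γ - 1) := by
      gcongr
      exact integral_rpow_le (by linarith) hε.le
    _ = 1 / (1 - γ) := by
      rw [div_mul_eq_mul_div, ← rpow_add ha0, show -γ + 1 + (γ - 1) = 0 by ring, rpow_zero,
        neg_add_eq_sub]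
    _ ≤ a ^ (δ - γ) / (1 - γ) := by
      have : 0 < 1 - γ := by linarith
      gcongr
      exact one_le_rpow_of_pos_of_le_one_of_nonpos ha0 ha1 (by linarith)
  have hrpow (p : ℝ) : IntervalIntegrable (fun b : ℝ => b ^ p) volume a 1 :=
    intervalIntegrable_rpow (Or.inr (notMem_uIcc_of_lt ha0 one_pos))
  have above : ∫ b in a..1, kappa γ Γ a b ≤ a ^ (δ - γ) / (Γ - δ) := calc
    ∫ b in a..1, kappa γ Γ a b = a ^ (Γ - γ) * ∫ b in a..1, b ^ (-(1 - γ + Γ)) := by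
      rw [← intervalIntegral.integral_const_mul]
      exact integral_congr fun b hb => kappa_of_le (uIcc_of_le ha1 ▸ hb).1
    _ ≤ a ^ (Γ - γ) * ∫ b in a..1, b ^ (-1 - (Γ - δ)) := by
      gcongr
      exact integral_mono_on ha1 (hrpow _) (hrpow _) fun b hb =>
        rpow_le_rpow_of_exponent_ge (ha0.trans_le hb.1) hb.2 (by linarith)
    _ ≤ a ^ (Γ - γ) * (a ^ (-(Γ - δ)) / (Γ - δ)) := by
      gcongr
      exact integral_rpow_neg_one_sub_le (by linarith) ha0 ha1
    _ = a ^ (δ - γ) / (Γ - δ) := by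
      rw [mul_div_assoc', ← rpow_add ha0, show Γ - γ + -(Γ - δ) = δ - γ by ring]
  have hΓ : 0 ≤ Γ := hδ.trans hδΓ.le
  rw [bowTieA, ← integral_add_adjacent_intervals
    (intervalIntegrable_kappa_right hγ1.le hΓ hε hεa le_rfl hεa)
    (intervalIntegrable_kappa_right hγ1.le hΓ hε hεa hεa (hεa.trans ha1))]
  exact (add_le_add below above).trans_eq (by ring)

theorem kappa_mul_bowTieW_le (hγ0 : 0 < γ) (hγ1 : γ < 1) (hΓ : 0 ≤ Γ) (hε : 0 < ε) (ha : 0 ≤ a)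
    (hb : b ∈ Icc ε 1) :
    kappa γ Γ a b * bowTieW γ Γ ε b ≤ (1 / (Γ - γ + 1) + 1 / γ) * (kappa γ Γ a b * b ^ (-γ)) :=
  (mul_le_mul_of_nonneg_left (bowTieW_le hγ0 hγ1 hΓ hε hb)
    (kappa_nonneg ha (hε.trans_le hb.1).le)).trans_eq (by ring)

theorem intervalIntegrable_kappa_mul_bowTieW (hγ0 : 0 < γ) (hγ1 : γ < 1) (hΓ : 0 ≤ Γ)
    (hε : 0 < ε) (hε1 : ε ≤ 1) (ha : ε ≤ a) :
    IntervalIntegrable (fun b => kappa γ Γ a b * bowTieW γ Γ ε b) volume ε 1 := by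
  refine ((intervalIntegrable_kappa_mul_rpow hγ1.le hΓ hε ha le_rfl hε1 (-γ)).const_mul
    (1 / (Γ - γ + 1) + 1 / γ)).mono_fun'
    ((measurable_kappa.comp measurable_prodMk_left).mul measurable_bowTieW).aestronglyMeasurable
    (ae_restrict_of_forall_mem measurableSet_uIoc fun b hb => ?_)
  rw [uIoc_of_le hε1] at hb
  have hb0 := hε.trans hb.1
  dsimp only
  rw [norm_of_nonneg (mul_nonneg (kappa_nonneg (hε.trans_le ha).le hb0.le)
    (bowTieW_nonneg hε.le hε1 hb0.le))]
  exact kappa_mul_bowTieW_le hγ0 hγ1 hΓ hε (hε.trans_le ha).le ⟨hb.1.le, hb.2⟩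

theorem bowTieB_le (hγ0 : 0 < γ) (hγ1 : γ < 1) (hΓ : 0 < Γ) (hε : 0 < ε) (ha : a ∈ Icc ε 1) :
    bowTieB γ Γ ε a ≤ (1 / (Γ - γ + 1) + 1 / γ) *
      (a ^ (γ - 1) * (∫ b in ε..1, b ^ (-(2 * γ))) + a ^ (-γ) / Γ) := by
  obtain ⟨hεa, ha1⟩ := ha
  have ha0 := hε.trans_le hεa
  have hε1 := hεa.trans ha1
  have below : ∫ b in ε..a, kappa γ Γ a b * b ^ (-γ) ≤
      a ^ (γ - 1) * ∫ b in ε..1, b ^ (-(2 * γ)) := calc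
    ∫ b in ε..a, kappa γ Γ a b * b ^ (-γ) = a ^ (γ - 1) * ∫ b in ε..a, b ^ (-(2 * γ)) := by
      rw [← intervalIntegral.integral_const_mul]
      refine integral_congr fun b hb => ?_
      rw [uIcc_of_le hεa] at hb
      have hb0 := hε.trans_le hb.1
      rw [kappa_of_ge hb0 hb.2, show -(2 * γ) = -γ + -γ by ring, rpow_add hb0]
      ring
    _ ≤ a ^ (γ - 1) * ∫ b in ε..1, b ^ (-(2 * γ)) := by
      gcongr
      exact integral_mono_interval le_rfl hεa ha1
        (ae_restrict_of_forall_mem measurableSet_Ioc fun b hb => rpow_nonneg (hε.trans hb.1).le _)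
        (intervalIntegrable_rpow (Or.inr (notMem_uIcc_of_lt hε one_pos)))
  have above : ∫ b in a..1, kappa γ Γ a b * b ^ (-γ) ≤ a ^ (-γ) / Γ := calc
    ∫ b in a..1, kappa γ Γ a b * b ^ (-γ) = a ^ (Γ - γ) * ∫ b in a..1, b ^ (-1 - Γ) := by
      rw [← intervalIntegral.integral_const_mul]
      refine integral_congr fun b hb => ?_
      rw [uIcc_of_le ha1] at hb
      rw [kappa_of_le hb.1, mul_assoc, ← rpow_add (ha0.trans_le hb.1)]
      ring_nf
    _ ≤ a ^ (Γ - γ) * (a ^ (-Γ) / Γ) := by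
      gcongr
      exact integral_rpow_neg_one_sub_le hΓ ha0 ha1
    _ = a ^ (-γ) / Γ := by
      rw [mul_div_assoc', ← rpow_add ha0, show Γ - γ + -Γ = -γ by ring]
  have hI (u v : ℝ) (hu : ε ≤ u) (hv : ε ≤ v) :=
    intervalIntegrable_kappa_mul_rpow hγ1.le hΓ.le hε hεa hu hv (-γ)
  have hK : 0 ≤ 1 / (Γ - γ + 1) + 1 / γ := by
    have : 0 < Γ - γ + 1 := by linarith
    positivity
  calc bowTieB γ Γ ε a
      ≤ ∫ b in ε..1, (1 / (Γ - γ + 1) + 1 / γ) * (kappa γ Γ a b * b ^ (-γ)) :=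
        integral_mono_on hε1 (intervalIntegrable_kappa_mul_bowTieW hγ0 hγ1 hΓ.le hε hε1 hεa)
          ((hI ε 1 le_rfl hε1).const_mul _)
          fun _ hb => kappa_mul_bowTieW_le hγ0 hγ1 hΓ.le hε ha0.le hb
    _ = (1 / (Γ - γ + 1) + 1 / γ) * ((∫ b in ε..a, kappa γ Γ a b * b ^ (-γ)) +
          ∫ b in a..1, kappa γ Γ a b * b ^ (-γ)) := by
      rw [intervalIntegral.integral_const_mul,
        integral_add_adjacent_intervals (hI ε a le_rfl hεa) (hI a 1 hεa hε1)]
    _ ≤ _ := by gcongr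

theorem bowTieA_mul_bowTieB_le {δ : ℝ} (hγ : 1 / 2 ≤ γ) (hγ1 : γ < 1) (hδ : 0 ≤ δ) (hδγ : δ ≤ γ)
    (hδΓ : δ < Γ) (hε : 0 < ε) (ha : a ∈ Icc ε 1) :
    bowTieA γ Γ ε a * bowTieB γ Γ ε a ≤
      (1 / (1 - γ) + 1 / (Γ - δ)) * (1 / (Γ - γ + 1) + 1 / γ) *
        ((∫ b in ε..1, b ^ (-(2 * γ))) + ε ^ (1 - 2 * γ) / Γ) * a ^ (δ - 1) := by
  have hΓ : 0 < Γ := hδ.trans_lt hδΓ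
  have ha0 := hε.trans_le ha.1
  have hKA : 0 ≤ 1 / (1 - γ) + 1 / (Γ - δ) := by
    have : 0 < 1 - γ := by linarith
    have : 0 < Γ - δ := by linarith
    positivity
  have hKB : 0 ≤ 1 / (Γ - γ + 1) + 1 / γ := by
    have : 0 < Γ - γ + 1 := by linarith
    have : 0 < γ := by linarith
    positivity
  calc bowTieA γ Γ ε a * bowTieB γ Γ ε a
      ≤ ((1 / (1 - γ) + 1 / (Γ - δ)) * a ^ (δ - γ)) * ((1 / (Γ - γ + 1) + 1 / γ) *
          (a ^ (γ - 1) * (∫ b in ε..1, b ^ (-(2 * γ))) + a ^ (-γ) / Γ)) :=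
        mul_le_mul (bowTieA_le hγ1 hδ hδγ hδΓ hε ha) (bowTieB_le (by linarith) hγ1 hΓ hε ha)
          (bowTieB_nonneg hε.le (ha.1.trans ha.2) ha0.le) (by positivity)
    _ = (1 / (1 - γ) + 1 / (Γ - δ)) * (1 / (Γ - γ + 1) + 1 / γ) *
        ((∫ b in ε..1, b ^ (-(2 * γ))) + a ^ (1 - 2 * γ) / Γ) * a ^ (δ - 1) := by
      have e1 : a ^ (δ - γ) * a ^ (γ - 1) = a ^ (δ - 1) := by rw [← rpow_add ha0]; ring_nf
      have e2 : a ^ (δ - γ) * a ^ (-γ) = a ^ (1 - 2 * γ) * a ^ (δ - 1) := by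
        rw [← rpow_add ha0, ← rpow_add ha0]; ring_nf
      linear_combination (1 / (1 - γ) + 1 / (Γ - δ)) * (1 / (Γ - γ + 1) + 1 / γ) *
        ((∫ b in ε..1, b ^ (-(2 * γ))) * e1 + e2 / Γ)
    _ ≤ _ := by
      have := rpow_le_rpow_of_nonpos hε ha.1 (by linarith : 1 - 2 * γ ≤ 0)
      gcongr

theorem exists_bowTieA_mul_bowTieB_le (hγ : 1 / 2 ≤ γ) (hγ1 : γ < 1) (hΓ : 0 < Γ) :
    ∃ C δ : ℝ, 0 ≤ C ∧ 0 < δ ∧ ∀ ε a, 0 < ε → a ∈ Icc ε 1 →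
      bowTieA γ Γ ε a * bowTieB γ Γ ε a ≤
        C * ((∫ b in ε..1, b ^ (-(2 * γ))) + ε ^ (1 - 2 * γ)) * a ^ (δ - 1) := by
  set δ := min γ (Γ / 2)
  have hδ : 0 < δ := lt_min (by linarith) (by linarith)
  have hδΓ : δ < Γ := (min_le_right _ _).trans_lt (by linarith)
  have hKA : 0 ≤ 1 / (1 - γ) + 1 / (Γ - δ) := by
    have : 0 < 1 - γ := by linarith
    have : 0 < Γ - δ := by linarith
    positivity
  have hKB : 0 ≤ 1 / (Γ - γ + 1) + 1 / γ := by
    have : 0 < Γ - γ + 1 := by linarith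
    have : 0 < γ := by linarith
    positivity
  refine ⟨(1 / (1 - γ) + 1 / (Γ - δ)) * (1 / (Γ - γ + 1) + 1 / γ) * (1 + 1 / Γ), δ,
    by positivity, hδ, fun ε a hε ha => ?_⟩
  refine (bowTieA_mul_bowTieB_le hγ hγ1 hδ.le (min_le_left _ _) hδΓ hε ha).trans ?_
  have hJ : 0 ≤ ∫ b in ε..1, b ^ (-(2 * γ)) :=
    integral_nonneg (ha.1.trans ha.2) fun b hb => rpow_nonneg (hε.le.trans hb.1) _
  have hεγ : 0 ≤ ε ^ (1 - 2 * γ) := rpow_nonneg hε.le _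
  have hsum : (∫ b in ε..1, b ^ (-(2 * γ))) + ε ^ (1 - 2 * γ) / Γ ≤
      (1 + 1 / Γ) * ((∫ b in ε..1, b ^ (-(2 * γ))) + ε ^ (1 - 2 * γ)) := by
    rw [div_eq_mul_one_div _ Γ]
    nlinarith [one_div_pos.2 hΓ]
  have hpow := rpow_nonneg (hε.trans_le ha.1).le (δ - 1)
  calc _ ≤ (1 / (1 - γ) + 1 / (Γ - δ)) * (1 / (Γ - γ + 1) + 1 / γ) *
        ((1 + 1 / Γ) * ((∫ b in ε..1, b ^ (-(2 * γ))) + ε ^ (1 - 2 * γ))) * a ^ (δ - 1) := by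
        gcongr
    _ = _ := by ring

theorem intervalIntegrable_bowTieA_mul_bowTieB (hγ : 1 / 2 ≤ γ) (hγ1 : γ < 1) (hΓ : 0 < Γ)
    (hε : 0 < ε) (hε1 : ε ≤ 1) :
    IntervalIntegrable (fun a => bowTieA γ Γ ε a * bowTieB γ Γ ε a) volume ε 1 := by
  obtain ⟨C, δ, -, -, hAB⟩ := exists_bowTieA_mul_bowTieB_le hγ hγ1 hΓ
  refine ((intervalIntegrable_rpow (r := δ - 1) (Or.inr (notMem_uIcc_of_lt hε one_pos))).const_mul
    (C * ((∫ b in ε..1, b ^ (-(2 * γ))) + ε ^ (1 - 2 * γ)))).mono_fun'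
    (measurable_bowTieA.mul measurable_bowTieB).aestronglyMeasurable
    (ae_restrict_of_forall_mem measurableSet_uIoc fun a ha => ?_)
  rw [uIoc_of_le hε1] at ha
  have ha0 := (hε.trans ha.1).le
  dsimp only
  rw [norm_of_nonneg (mul_nonneg (bowTieA_nonneg hε.le hε1 ha0) (bowTieB_nonneg hε.le hε1 ha0))]
  exact hAB ε a hε ⟨ha.1.le, ha.2⟩

theorem exists_openBowTie_le (hγ : 1 / 2 ≤ γ) (hγ1 : γ < 1) (hΓ : 0 < Γ) :
    ∃ C, 0 ≤ C ∧ ∀ ε, 0 < ε → ε ≤ 1 →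
      openBowTie γ Γ ε ≤ C * ((∫ b in ε..1, b ^ (-(2 * γ))) + ε ^ (1 - 2 * γ)) := by
  obtain ⟨C, δ, hC, hδ, hAB⟩ := exists_bowTieA_mul_bowTieB_le hγ hγ1 hΓ
  refine ⟨C / δ, by positivity, fun ε hε hε1 => ?_⟩
  have hJ : 0 ≤ (∫ b in ε..1, b ^ (-(2 * γ))) + ε ^ (1 - 2 * γ) :=
    add_nonneg (integral_nonneg hε1 fun b hb => rpow_nonneg (hε.le.trans hb.1) _)
      (rpow_nonneg hε.le _)
  rw [openBowTie_eq]
  calc _ ≤ ∫ a in ε..1, C * ((∫ b in ε..1, b ^ (-(2 * γ))) + ε ^ (1 - 2 * γ)) * a ^ (δ - 1) :=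
        integral_mono_on hε1 (intervalIntegrable_bowTieA_mul_bowTieB hγ hγ1 hΓ hε hε1)
          ((intervalIntegrable_rpow (Or.inr (notMem_uIcc_of_lt hε one_pos))).const_mul _)
          fun a ha => hAB ε a hε ha
    _ ≤ C * ((∫ b in ε..1, b ^ (-(2 * γ))) + ε ^ (1 - 2 * γ)) *
          ((1 : ℝ) ^ (δ - 1 + 1) / (δ - 1 + 1)) := by
      rw [intervalIntegral.integral_const_mul]
      gcongr
      exact integral_rpow_le (by linarith) hε.le
    _ = C / δ * ((∫ b in ε..1, b ^ (-(2 * γ))) + ε ^ (1 - 2 * γ)) := by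
      rw [one_rpow, sub_add_cancel]
      ring

theorem bowTieW_ge (hγ : γ ≤ 1) (hΓ : 0 ≤ Γ) (hε : 0 < ε) (hb : b ∈ Icc ε (1 / 2)) :
    b ^ (-γ) / 2 ≤ bowTieW γ Γ ε b := by
  obtain ⟨hεb, hb2⟩ := hb
  have hb0 := hε.trans_le hεb
  have hb1 : b ≤ 1 := by linarith
  calc b ^ (-γ) / 2 ≤ (1 - b) * b ^ (-γ) := by nlinarith [rpow_nonneg hb0.le (-γ)]
    _ = ∫ _ in b..1, b ^ (-γ) := by rw [intervalIntegral.integral_const, smul_eq_mul]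
    _ ≤ ∫ w in b..1, kappa γ Γ w b :=
      integral_mono_on hb1 intervalIntegrable_const
        (intervalIntegrable_kappa_left hγ hΓ hε hεb hεb (hεb.trans hb1))
        fun w hw => rpow_neg_le_kappa hγ hb0 hw.1 hw.2
    _ ≤ bowTieW γ Γ ε b :=
      integral_mono_interval hεb hb1 le_rfl
        (ae_restrict_of_forall_mem measurableSet_Ioc fun w hw =>
          kappa_nonneg (hε.trans hw.1).le hb0.le)
        (intervalIntegrable_kappa_left hγ hΓ hε hεb le_rfl (hεb.trans hb1))

theorem bowTieA_ge (hγ0 : 0 ≤ γ) (hγ1 : γ ≤ 1) (hΓ : 0 ≤ Γ) (hε : 0 < ε) (hε4 : ε ≤ 1 / 4)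
    (ha : a ∈ Icc (1 / 2) 1) : 1 / 4 ≤ bowTieA γ Γ ε a := by
  obtain ⟨ha2, ha1⟩ := ha
  have hεa : ε ≤ a := by linarith
  calc (1 : ℝ) / 4 ≤ a - ε := by linarith
    _ = ∫ _ in ε..a, (1 : ℝ) := by simp
    _ ≤ ∫ b in ε..a, kappa γ Γ a b :=
      integral_mono_on hεa intervalIntegrable_const
        (intervalIntegrable_kappa_right hγ1 hΓ hε hεa le_rfl hεa) fun b hb =>
          (one_le_rpow_of_pos_of_le_one_of_nonpos (hε.trans_le hb.1) (hb.2.trans ha1)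
            (by linarith)).trans (rpow_neg_le_kappa hγ1 (hε.trans_le hb.1) hb.2 ha1)
    _ ≤ bowTieA γ Γ ε a :=
      integral_mono_interval le_rfl hεa ha1
        (ae_restrict_of_forall_mem measurableSet_Ioc fun b hb =>
          kappa_nonneg (hε.le.trans hεa) (hε.trans hb.1).le)
        (intervalIntegrable_kappa_right hγ1 hΓ hε hεa le_rfl (hεa.trans ha1))

theorem bowTieB_ge (hγ0 : 0 < γ) (hγ1 : γ < 1) (hΓ : 0 ≤ Γ) (hε : 0 < ε) (hε2 : ε ≤ 1 / 2)
    (ha : a ∈ Icc (1 / 2) 1) : (∫ b in ε..1 / 2, b ^ (-(2 * γ))) / 2 ≤ bowTieB γ Γ ε a := by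
  obtain ⟨ha2, ha1⟩ := ha
  have hεa : ε ≤ a := by linarith
  calc (∫ b in ε..1 / 2, b ^ (-(2 * γ))) / 2 = ∫ b in ε..1 / 2, b ^ (-(2 * γ)) / 2 :=
        (intervalIntegral.integral_div _ _).symm
    _ ≤ ∫ b in ε..1 / 2, kappa γ Γ a b * bowTieW γ Γ ε b := by
      refine integral_mono_on hε2
        ((intervalIntegrable_rpow (Or.inr (notMem_uIcc_of_lt hε (by norm_num)))).div_const _)
        ((intervalIntegrable_kappa_mul_bowTieW hγ0 hγ1 hΓ hε (by linarith) hεa).mono_set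
          (uIcc_subset_uIcc_left (mem_uIcc_of_le (by linarith) (by norm_num))))
        fun b hb => ?_
      have hb0 := hε.trans_le hb.1
      calc b ^ (-(2 * γ)) / 2 = b ^ (-γ) * (b ^ (-γ) / 2) := by
            rw [show -(2 * γ) = -γ + -γ by ring, rpow_add hb0]; ring
        _ ≤ kappa γ Γ a b * bowTieW γ Γ ε b :=
          mul_le_mul (rpow_neg_le_kappa hγ1.le hb0 (hb.2.trans ha2) ha1)
            (bowTieW_ge hγ1.le hΓ hε hb) (by positivity) (kappa_nonneg (by linarith) hb0.le)
    _ ≤ bowTieB γ Γ ε a :=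
      integral_mono_interval le_rfl hε2 (by norm_num)
        (ae_restrict_of_forall_mem measurableSet_Ioc fun b hb =>
          mul_nonneg (kappa_nonneg (by linarith) (hε.trans hb.1).le)
            (bowTieW_nonneg hε.le (by linarith) (hε.trans hb.1).le))
        (intervalIntegrable_kappa_mul_bowTieW hγ0 hγ1 hΓ hε (by linarith) hεa)

theorem openBowTie_ge (hγ : 1 / 2 ≤ γ) (hγ1 : γ < 1) (hΓ : 0 < Γ) (hε : 0 < ε)
    (hε4 : ε ≤ 1 / 4) : (∫ b in ε..1 / 2, b ^ (-(2 * γ))) / 16 ≤ openBowTie γ Γ ε := by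
  have hI : 0 ≤ ∫ b in ε..1 / 2, b ^ (-(2 * γ)) :=
    integral_nonneg (by linarith) fun b hb => rpow_nonneg (hε.le.trans hb.1) _
  have hAB := intervalIntegrable_bowTieA_mul_bowTieB hγ hγ1 hΓ hε (by linarith)
  rw [openBowTie_eq]
  calc (∫ b in ε..1 / 2, b ^ (-(2 * γ))) / 16
      = ∫ _ in (1 / 2 : ℝ)..1, 1 / 4 * ((∫ b in ε..1 / 2, b ^ (-(2 * γ))) / 2) := by
        rw [intervalIntegral.integral_const, smul_eq_mul]; ring
    _ ≤ ∫ a in (1 / 2 : ℝ)..1, bowTieA γ Γ ε a * bowTieB γ Γ ε a :=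
      integral_mono_on (by norm_num) intervalIntegrable_const
        (hAB.mono_set (uIcc_subset_uIcc_right (mem_uIcc_of_le (by linarith) (by norm_num))))
        fun a ha => mul_le_mul (bowTieA_ge (by linarith) hγ1.le hΓ.le hε hε4 ha)
          (bowTieB_ge (by linarith) hγ1 hΓ.le hε (by linarith) ha) (by positivity)
          (bowTieA_nonneg hε.le (by linarith) (by linarith [ha.1]))
    _ ≤ ∫ a in ε..1, bowTieA γ Γ ε a * bowTieB γ Γ ε a :=
      integral_mono_interval (by linarith) (by norm_num) le_rfl
        (ae_restrict_of_forall_mem measurableSet_Ioc fun a ha =>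
          mul_nonneg (bowTieA_nonneg hε.le (by linarith) (hε.trans ha.1).le)
            (bowTieB_nonneg hε.le (by linarith) (hε.trans ha.1).le))
        hAB

end BowTie

theorem openBowTie_bounds_of_eq_half {Γ : ℝ} (hΓ : 0 < Γ) :
    ∃ c C : ℝ, 0 < c ∧ c ≤ C ∧ ∀ ε, 0 < ε → ε < 1 / 4 →
      c * log (1 / ε) ≤ openBowTie (1 / 2) Γ ε ∧ openBowTie (1 / 2) Γ ε ≤ C * log (1 / ε) := by
  obtain ⟨C, hC, hle⟩ := exists_openBowTie_le (γ := 1 / 2) le_rfl (by norm_num) hΓ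
  refine ⟨1 / 32, max (1 / 32) (2 * C), by norm_num, le_max_left _ _, fun ε hε hε4 => ?_⟩
  have hlog4 : log 4 ≤ log (1 / ε) :=
    log_le_log (by norm_num) (by rw [le_div_iff₀ hε]; linarith)
  have hlog2 : log 4 = 2 * log 2 := by
    rw [show (4 : ℝ) = 2 ^ 2 by norm_num, log_pow]; norm_num
  have one_le_log4 : 1 ≤ log 4 :=
    ((lt_log_iff_exp_lt (by norm_num)).2 (exp_one_lt_d9.trans (by norm_num))).le
  have hexp : -(2 * (1 / 2 : ℝ)) = -1 := by norm_num
  constructor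
  · calc 1 / 32 * log (1 / ε) ≤ (log (1 / ε) - log 2) / 16 := by linarith
      _ = (∫ b in ε..1 / 2, b ^ (-(2 * (1 / 2 : ℝ)))) / 16 := by
        rw [hexp, integral_rpow_neg_one hε (by norm_num), div_right_comm,
          log_div (by positivity) two_ne_zero]
      _ ≤ openBowTie (1 / 2) Γ ε := openBowTie_ge le_rfl (by norm_num) hΓ hε hε4.le
  · calc openBowTie (1 / 2) Γ ε ≤ C * (log (1 / ε) + 1) := by
          simpa [hexp, integral_rpow_neg_one hε one_pos] using hle ε hε (by linarith)
      _ ≤ 2 * C * log (1 / ε) := by nlinarith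
      _ ≤ max (1 / 32) (2 * C) * log (1 / ε) := by
          gcongr
          · linarith
          · exact le_max_right _ _

theorem openBowTie_bounds_of_half_lt {γ Γ : ℝ} (hγ : 1 / 2 < γ) (hγ1 : γ < 1) (hΓ : 0 < Γ) :
    ∃ c C : ℝ, 0 < c ∧ c ≤ C ∧ ∀ ε, 0 < ε → ε < 1 / 4 →
      c * ε ^ (1 - 2 * γ) ≤ openBowTie γ Γ ε ∧ openBowTie γ Γ ε ≤ C * ε ^ (1 - 2 * γ) := by
  obtain ⟨C, hC, hle⟩ := exists_openBowTie_le hγ.le hγ1 hΓ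
  refine ⟨1 / 64, max (1 / 64) (C * (1 / (2 * γ - 1) + 1)), by norm_num, le_max_left _ _,
    fun ε hε hε4 => ⟨?_, ?_⟩⟩
  · calc 1 / 64 * ε ^ (1 - 2 * γ) = ε ^ (1 - 2 * γ) / 4 / 16 := by ring
      _ ≤ (∫ b in ε..1 / 2, b ^ (-(2 * γ))) / 16 := by
        gcongr
        exact le_integral_rpow_neg_two_mul (by linarith) hγ1.le hε hε4.le
      _ ≤ openBowTie γ Γ ε := openBowTie_ge hγ.le hγ1 hΓ hε hε4.le
  · have hJ := integral_rpow_neg_two_mul_le hγ hε (by linarith)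
    calc openBowTie γ Γ ε ≤ C * ((∫ b in ε..1, b ^ (-(2 * γ))) + ε ^ (1 - 2 * γ)) :=
          hle ε hε (by linarith)
      _ ≤ C * (ε ^ (1 - 2 * γ) / (2 * γ - 1) + ε ^ (1 - 2 * γ)) := by gcongr
      _ = C * (1 / (2 * γ - 1) + 1) * ε ^ (1 - 2 * γ) := by ring
      _ ≤ max (1 / 64) (C * (1 / (2 * γ - 1) + 1)) * ε ^ (1 - 2 * γ) := by
          gcongr
          exact le_max_right _ _

/-- Growth of the truncated expected open-bow-tie count for `γ ∈ [1/2,1)` and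
`Γ > 0`: it is of order `log(1/ε)` if `γ = 1/2` and of order `ε^{1-2γ}` if
`γ ∈ (1/2,1)`, for small truncation `ε`. -/
theorem stmt17 (γ Γ : ℝ) (hγ0 : 1 / 2 ≤ γ) (hγ1 : γ < 1) (hΓ : 0 < Γ) :
    ∃ c C ε₀ : ℝ, 0 < c ∧ c ≤ C ∧ 0 < ε₀ ∧ ε₀ < 1 ∧
      ∀ ε : ℝ, 0 < ε → ε < ε₀ →
        (γ = 1 / 2 →
          c * Real.log (1 / ε) ≤ openBowTie γ Γ ε ∧
          openBowTie γ Γ ε ≤ C * Real.log (1 / ε)) ∧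
        (1 / 2 < γ →
          c * ε ^ (1 - 2 * γ) ≤ openBowTie γ Γ ε ∧
          openBowTie γ Γ ε ≤ C * ε ^ (1 - 2 * γ)) := by
  rcases hγ0.eq_or_lt with rfl | hγ
  · obtain ⟨c, C, hc, hcC, h⟩ := openBowTie_bounds_of_eq_half hΓ
    exact ⟨c, C, 1 / 4, hc, hcC, by norm_num, by norm_num, fun ε hε hε4 =>
      ⟨fun _ => h ε hε hε4, fun h => absurd h (lt_irrefl _)⟩⟩
  · obtain ⟨c, C, hc, hcC, h⟩ := openBowTie_bounds_of_half_lt hγ hγ1 hΓ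
    exact ⟨c, C, 1 / 4, hc, hcC, by norm_num, by norm_num, fun ε hε hε4 =>
      ⟨fun h => absurd h hγ.ne', fun _ => h ε hε hε4⟩⟩
end
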